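/- arXiv:1404.0648 — 4 statements merged into one kernel-verified Lean document; each statement's English description precedes it below -/
import Mathlib

section
/- The function ω: ℝ → ℝ defined by ω(0) = 1/2 and ω(y) = (exp(−y) − 1 + y)/y² for y ≠ 0 is continuously differentiable on ℝ, with ω'(0) = −1/6 and ω'(y) = (2(1 − exp(−y)) − y(1 + exp(−y)))/y³ for y ≠ 0. Moreover ω is positive and nonincreasing on ℝ, ω(y) → +∞ as y → −∞, and ω(y) → 0 as y → +∞. -/
/-!
Taylor's formula with integral remainder gives `ω y = ∫₀¹ (1 - t) e^{-t y} dt`, removing the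
singularity at `0`. Differentiating under the integral sign, `ω' y = -∫₀¹ t (1 - t) e^{-t y} dt`,
which is continuous and negative. The limits come from the bounds
`1/2 - y/6 ≤ ω y` (insert `e^{-t y} ≥ 1 - t y` into the integral) and `ω y ≤ 1/y` for `y > 0`.
-/

/-- ω(0) = 1/2 and ω(y) = (exp(−y) − 1 + y)/y² for y ≠ 0. -/
noncomputable def omegaFn (y : ℝ) : ℝ := if y = 0 then 1 / 2 else (Real.exp (-y) - 1 + y) / y ^ 2

open Real Filter intervalIntegral

theorem integral_one_sub : ∫ t in (0 : ℝ)..1, (1 - t) = 1 / 2 := by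
  rw [integral_sub intervalIntegrable_const intervalIntegrable_id]
  norm_num [integral_id]

theorem integral_mul_one_sub : ∫ t in (0 : ℝ)..1, t * (1 - t) = 1 / 6 := by
  simp only [mul_sub, mul_one, ← sq]
  rw [integral_sub intervalIntegrable_id (intervalIntegrable_pow 2)]
  norm_num [integral_id, integral_pow]

theorem hasDerivAt_exp_neg_mul (t x : ℝ) :
    HasDerivAt (fun x => exp (-(t * x))) (-t * exp (-(t * x))) x := by
  simpa [mul_comm] using ((hasDerivAt_id x).const_mul t).neg.exp

theorem hasDerivAt_integral_mul_exp_neg_mul {g : ℝ → ℝ} (hg : Continuous g) (a b y : ℝ) :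
    HasDerivAt (fun x => ∫ t in a..b, g t * exp (-(t * x)))
      (-∫ t in a..b, t * g t * exp (-(t * y))) y := by
  rw [← integral_neg]
  refine (hasDerivAt_integral_of_dominated_loc_of_deriv_le
    (F := fun x t => g t * exp (-(t * x))) (F' := fun x t => -(t * g t * exp (-(t * x))))
    (bound := fun t => |t * g t| * exp (|t| * (|y| + 1))) (Metric.ball_mem_nhds y one_pos)
    (Eventually.of_forall fun x => (by fun_prop : Continuous _).aestronglyMeasurable)
    ((by fun_prop : Continuous _).intervalIntegrable _ _)
    (by fun_prop : Continuous _).aestronglyMeasurable ?_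
    ((by fun_prop : Continuous _).intervalIntegrable _ _) ?_).2
  · refine Eventually.of_forall fun t _ x hx => ?_
    have hx : |x| ≤ |y| + 1 := by
      have := abs_sub_abs_le_abs_sub x y
      rw [Metric.mem_ball, Real.dist_eq] at hx
      linarith
    have hexp : -(t * x) ≤ |t| * (|y| + 1) := calc
      -(t * x) ≤ |t| * |x| := by rw [← abs_mul]; exact neg_le_abs _
      _ ≤ |t| * (|y| + 1) := by gcongr
    rw [norm_neg, norm_mul, norm_of_nonneg (exp_pos _).le, norm_eq_abs]
    gcongr
  · refine Eventually.of_forall fun t _ x _ => ?_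
    exact ((hasDerivAt_exp_neg_mul t x).const_mul (g t)).congr_deriv (by ring)

theorem omegaFn_eq_integral (y : ℝ) :
    omegaFn y = ∫ t in (0 : ℝ)..1, (1 - t) * exp (-(t * y)) := by
  rcases eq_or_ne y 0 with rfl | hy
  · simp [omegaFn, integral_one_sub]
  · have hF : ∀ t ∈ Set.uIcc (0 : ℝ) 1,
        HasDerivAt (fun t => exp (-(y * t)) * ((t + (1 / y - 1)) / y))
          ((1 - t) * exp (-(y * t))) t := fun t _ =>
      ((hasDerivAt_exp_neg_mul y t).mul (((hasDerivAt_id' t).add_const _).div_const y)).congr_deriv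
        (by field_simp; ring)
    simp_rw [mul_comm _ y]
    rw [integral_eq_sub_of_hasDerivAt hF ((by fun_prop : Continuous _).intervalIntegrable _ _)]
    simp only [omegaFn, if_neg hy]
    field_simp
    simp only [add_sub_cancel, mul_one, mul_zero, neg_zero, exp_zero, zero_add, one_mul]
    ring

theorem hasDerivAt_omegaFn (y : ℝ) :
    HasDerivAt omegaFn (-∫ t in (0 : ℝ)..1, t * (1 - t) * exp (-(t * y))) y := by
  rw [show omegaFn = _ from funext omegaFn_eq_integral]
  exact hasDerivAt_integral_mul_exp_neg_mul (by fun_prop) 0 1 y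

theorem deriv_omegaFn (y : ℝ) :
    deriv omegaFn y = -∫ t in (0 : ℝ)..1, t * (1 - t) * exp (-(t * y)) :=
  (hasDerivAt_omegaFn y).deriv

theorem differentiable_omegaFn : Differentiable ℝ omegaFn :=
  fun y => (hasDerivAt_omegaFn y).differentiableAt

theorem contDiff_omegaFn : ContDiff ℝ 1 omegaFn := by
  rw [contDiff_one_iff_deriv, funext deriv_omegaFn]
  exact ⟨differentiable_omegaFn,
    (continuous_parametric_intervalIntegral_of_continuous' (by fun_prop) 0 1).neg⟩

theorem deriv_omegaFn_zero : deriv omegaFn 0 = -(1 / 6) := by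
  simp [deriv_omegaFn, integral_mul_one_sub]

theorem deriv_omegaFn_of_ne_zero {y : ℝ} (hy : y ≠ 0) :
    deriv omegaFn y = (2 * (1 - exp (-y)) - y * (1 + exp (-y))) / y ^ 3 := by
  have hω : omegaFn =ᶠ[nhds y] fun x => (exp (-x) - 1 + x) / x ^ 2 :=
    (eventually_ne_nhds hy).mono fun x hx => if_neg hx
  have hnum : HasDerivAt (fun x => exp (-x) - 1 + x) (1 - exp (-y)) y :=
    (((hasDerivAt_neg' y).exp.sub_const 1).add (hasDerivAt_id' y)).congr_deriv (by ring)
  have hquot : HasDerivAt (fun x => (exp (-x) - 1 + x) / x ^ 2)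
      (((1 - exp (-y)) * y ^ 2 - (exp (-y) - 1 + y) * (2 * y)) / (y ^ 2) ^ 2) y :=
    hnum.div ((hasDerivAt_pow 2 y).congr_deriv (by ring)) (pow_ne_zero 2 hy)
  rw [hω.deriv_eq, hquot.deriv]
  field_simp
  ring

theorem omegaFn_pos (y : ℝ) : 0 < omegaFn y := by
  rw [omegaFn_eq_integral]
  refine intervalIntegral_pos_of_pos_on ((by fun_prop : Continuous _).intervalIntegrable _ _)
    (fun t ht => mul_pos (by linarith [ht.2]) (exp_pos _)) one_pos

theorem antitone_omegaFn : Antitone omegaFn := by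
  refine antitone_of_deriv_nonpos differentiable_omegaFn fun y => ?_
  rw [deriv_omegaFn, neg_nonpos]
  exact integral_nonneg zero_le_one fun t ht =>
    mul_nonneg (mul_nonneg ht.1 (by linarith [ht.2])) (exp_pos _).le

theorem one_half_sub_div_six_le_omegaFn (y : ℝ) : 1 / 2 - y / 6 ≤ omegaFn y := by
  have : ∫ t in (0 : ℝ)..1, (1 - t) * (1 - t * y) = 1 / 2 - y / 6 := by
    have h : ∀ t : ℝ, (1 - t) * (1 - t * y) = (1 - t) - y * (t * (1 - t)) := fun t => by ring
    simp only [h]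
    rw [integral_sub ((by fun_prop : Continuous _).intervalIntegrable _ _)
      ((by fun_prop : Continuous _).intervalIntegrable _ _), integral_const_mul, integral_one_sub,
      integral_mul_one_sub]
    ring
  rw [omegaFn_eq_integral, ← this]
  refine integral_mono_on zero_le_one ((by fun_prop : Continuous _).intervalIntegrable _ _)
    ((by fun_prop : Continuous _).intervalIntegrable _ _) fun t ht => ?_
  have := add_one_le_exp (-(t * y))
  exact mul_le_mul_of_nonneg_left (by linarith) (by linarith [ht.2])

theorem omegaFn_le_inv {y : ℝ} (hy : 0 < y) : omegaFn y ≤ y⁻¹ := by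
  rw [omegaFn, if_neg hy.ne', div_le_iff₀ (by positivity)]
  have : exp (-y) ≤ 1 := exp_le_one_iff.2 (by linarith)
  nlinarith [mul_inv_cancel₀ hy.ne']

theorem tendsto_omegaFn_atBot : Tendsto omegaFn atBot atTop := by
  refine tendsto_atTop_mono one_half_sub_div_six_le_omegaFn ?_
  convert tendsto_atTop_add_const_left _ (1 / 2)
    (tendsto_neg_atBot_atTop.atTop_div_const (by norm_num : (0 : ℝ) < 6)) using 2
  ring

theorem tendsto_omegaFn_atTop : Tendsto omegaFn atTop (nhds 0) :=
  tendsto_of_tendsto_of_tendsto_of_le_of_le' tendsto_const_nhds tendsto_inv_atTop_zero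
    (Eventually.of_forall fun y => (omegaFn_pos y).le)
    ((eventually_gt_atTop 0).mono fun _ hy => omegaFn_le_inv hy)

theorem omegaFn_properties :
    ContDiff ℝ 1 omegaFn ∧
    deriv omegaFn 0 = -(1 / 6) ∧
    (∀ y : ℝ, y ≠ 0 →
      deriv omegaFn y = (2 * (1 - Real.exp (-y)) - y * (1 + Real.exp (-y))) / y ^ 3) ∧
    (∀ y : ℝ, 0 < omegaFn y) ∧
    Antitone omegaFn ∧
    Filter.Tendsto omegaFn Filter.atBot Filter.atTop ∧
    Filter.Tendsto omegaFn Filter.atTop (nhds 0) :=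
  ⟨contDiff_omegaFn, deriv_omegaFn_zero, fun _ hy => deriv_omegaFn_of_ne_zero hy, omegaFn_pos,
    antitone_omegaFn, tendsto_omegaFn_atBot, tendsto_omegaFn_atTop⟩
end

section
/- Let ρ > 0, ε ∈ [0,1), ν ∈ [0,1], m₁ ∈ ℝ and η ∈ ℝ. The function b(u) = (1/(1−ε))·(ρu/(2+ρu))·(m₁/ρ)·𝒢_η(u) satisfies b(0) = 0 and, for all u ≥ 0, b'(u) = [−η − ρ/(2+ρu)]·b(u) + (m₁/(1−ε))·(1 + νρu)/(2+ρu). -/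
/-- ζ(0) = 1 and ζ(y) = (1 − exp(−y))/y for y ≠ 0. -/
noncomputable def zeta (y : ℝ) : ℝ := if y = 0 then 1 else (1 - Real.exp (-y)) / y

/-- 𝒢_η(u) = ζ(ηu) + νρu·ω(ηu). -/
noncomputable def Gfun (η ν ρ : ℝ) (u : ℝ) : ℝ := zeta (η * u) + ν * ρ * u * omegaFn (η * u)

/-- b(u) = (1/(1−ε))·(ρu/(2+ρu))·(m₁/ρ)·𝒢_η(u). -/
noncomputable def bFn (ρ ε ν m₁ η : ℝ) (u : ℝ) : ℝ :=
  (1 / (1 - ε)) * (ρ * u / (2 + ρ * u)) * (m₁ / ρ) * Gfun η ν ρ u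

/-
With N(u) = u·𝒢_η(u) one has b = (m₁/(1−ε))·N/(2+ρu), and N solves the linear equation
N' = 1 + νρu − ηN: indeed (u·ζ(ηu))' = exp(−ηu) and (u²·ω(ηu))' = u·ζ(ηu), as one sees from
the closed forms y·ζ(y) = 1 − exp(−y) and y²·ω(y) = exp(−y) − 1 + y, valid also at y = 0.
The claimed equation for b is then the quotient rule.
-/

open Real

theorem mul_zeta (y : ℝ) : y * zeta y = 1 - exp (-y) := by
  rcases eq_or_ne y 0 with rfl | hy
  · simp
  · rw [zeta, if_neg hy]
    field_simp

theorem sq_mul_omegaFn (y : ℝ) : y ^ 2 * omegaFn y = exp (-y) - 1 + y := by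
  rcases eq_or_ne y 0 with rfl | hy
  · simp
  · rw [omegaFn, if_neg hy]
    field_simp

theorem zeta_add_mul_omegaFn (y : ℝ) : zeta y + y * omegaFn y = 1 := by
  rcases eq_or_ne y 0 with rfl | hy
  · simp [zeta]
  · apply mul_left_cancel₀ hy
    linear_combination mul_zeta y + sq_mul_omegaFn y

theorem hasDerivAt_mul_zeta_mul (η u : ℝ) :
    HasDerivAt (fun u => u * zeta (η * u)) (exp (-(η * u))) u := by
  rcases eq_or_ne η 0 with rfl | hη
  · simpa [zeta] using hasDerivAt_id' u
  · have h : (fun u => u * zeta (η * u)) = fun u => (1 - exp (-(η * u))) / η := by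
      funext u
      rw [← mul_zeta, mul_assoc, mul_div_cancel_left₀ _ hη]
    rw [h]
    refine ((((hasDerivAt_id' u).const_mul η).fun_neg.exp.const_sub 1).div_const η).congr_deriv ?_
    field_simp

theorem hasDerivAt_sq_mul_omegaFn_mul (η u : ℝ) :
    HasDerivAt (fun u => u ^ 2 * omegaFn (η * u)) (u * zeta (η * u)) u := by
  rcases eq_or_ne η 0 with rfl | hη
  · simp only [zero_mul, omegaFn, zeta, if_true, mul_one]
    refine ((hasDerivAt_pow 2 u).mul_const (1 / 2)).congr_deriv ?_
    ring
  · have h : (fun u => u ^ 2 * omegaFn (η * u)) =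
        fun u => (exp (-(η * u)) - 1 + η * u) / η ^ 2 := by
      funext u
      rw [← sq_mul_omegaFn, mul_pow, mul_assoc, mul_div_cancel_left₀ _ (pow_ne_zero 2 hη)]
    rw [h]
    have hlin := (hasDerivAt_id' u).const_mul η
    refine (((hlin.fun_neg.exp.sub_const 1).add hlin).div_const (η ^ 2)).congr_deriv ?_
    apply mul_left_cancel₀ hη
    rw [← mul_assoc, mul_comm η u, mul_zeta]
    field_simp
    ring

theorem hasDerivAt_mul_Gfun (η ν ρ u : ℝ) :
    HasDerivAt (fun u => u * Gfun η ν ρ u) (1 + ν * ρ * u - η * (u * Gfun η ν ρ u)) u := by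
  have h : (fun u => u * Gfun η ν ρ u) =
      fun u => u * zeta (η * u) + ν * ρ * (u ^ 2 * omegaFn (η * u)) := by
    funext u
    simp only [Gfun]
    ring
  rw [h]
  refine ((hasDerivAt_mul_zeta_mul η u).add
    ((hasDerivAt_sq_mul_omegaFn_mul η u).const_mul (ν * ρ))).congr_deriv ?_
  simp only [Gfun]
  linear_combination mul_zeta (η * u) + ν * ρ * u * zeta_add_mul_omegaFn (η * u)

theorem bFn_eq {ρ : ℝ} (hρ : ρ ≠ 0) (ε ν m₁ η : ℝ) :
    bFn ρ ε ν m₁ η = fun u => m₁ / (1 - ε) * (u * Gfun η ν ρ u) / (2 + ρ * u) := by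
  funext u
  simp only [bFn]
  field_simp

theorem bFn_ODE_general (ρ ε ν m₁ η : ℝ) (hρ : 0 < ρ) :
    bFn ρ ε ν m₁ η 0 = 0 ∧
    ∀ u : ℝ, 0 ≤ u →
      HasDerivAt (bFn ρ ε ν m₁ η)
        ((-η - ρ / (2 + ρ * u)) * bFn ρ ε ν m₁ η u
          + (m₁ / (1 - ε)) * (1 + ν * ρ * u) / (2 + ρ * u)) u := by
  refine ⟨by simp [bFn], fun u hu => ?_⟩
  have hden : 2 + ρ * u ≠ 0 := by positivity
  rw [bFn_eq hρ.ne']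
  refine (((hasDerivAt_mul_Gfun η ν ρ u).const_mul (m₁ / (1 - ε))).div
    (((hasDerivAt_id' u).const_mul ρ).const_add 2) hden).congr_deriv ?_
  field_simp
  ring

theorem bFn_ODE (ρ ε ν m₁ η : ℝ) (hρ : 0 < ρ) (hε : ε ∈ Set.Ico (0:ℝ) 1)
    (hν : ν ∈ Set.Icc (0:ℝ) 1) :
    bFn ρ ε ν m₁ η 0 = 0 ∧
    ∀ u : ℝ, 0 ≤ u →
      HasDerivAt (bFn ρ ε ν m₁ η)
        ((-η - ρ / (2 + ρ * u)) * bFn ρ ε ν m₁ η u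
          + (m₁ / (1 - ε)) * (1 + ν * ρ * u) / (2 + ρ * u)) u :=
  bFn_ODE_general ρ ε ν m₁ η hρ
end

section
/- Let ρ > 0, ν ∈ [0,1], β, α ∈ ℝ with η = β − α ≠ 0, and T > 0. Define φ_η(t) = [1 + exp(−η(T−t)) + νρ(T−t)·ζ(η(T−t)) + (β/ρ)·(2 + ρ(T−t)·{1 + ζ(η(T−t)) + νρ(T−t)·ω(η(T−t))})] / (2·(2 + ρ(T−t))) for t ∈ [0,T]. Then for all t ∈ [0,T]: φ_η(t)·exp(β(T−t)) = (β/2)·(1/ρ + ν/η)·exp(β(T−t)) + [1/2 + ν(ρ−2β)/(2η) + (β/(2η))·(1 − νρ/η)]·exp(β(T−t))/(2+ρ(T−t)) + [1/2 − νρ/(2η) − (β/(2η))·(1 − νρ/η)]·exp(α(T−t))/(2+ρ(T−t)). -/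
/-- φ_η(t) of the optimal strategy. -/
noncomputable def phiFn (ρ ν β η T : ℝ) (t : ℝ) : ℝ :=
  (1 + Real.exp (-(η * (T - t))) + ν * ρ * (T - t) * zeta (η * (T - t))
      + (β / ρ) * (2 + ρ * (T - t)
          * (1 + zeta (η * (T - t)) + ν * ρ * (T - t) * omegaFn (η * (T - t)))))
    / (2 * (2 + ρ * (T - t)))

/-!
Although ζ and ω are defined by cases, `y * ζ y` and `y ^ 2 * ω y` are the entire functions
`1 - exp (-y)` and `exp (-y) - 1 + y`. Hence for `η ≠ 0` the function φ_η has a closed form in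
`exp (-η (T - t))` with no case split at `t = T`; multiplying by `exp (β (T - t))` and using
`exp (β (T - t)) exp (-η (T - t)) = exp (α (T - t))` turns the identity into one between rational functions.
-/

open Real

theorem mul_zeta_mul {η : ℝ} (hη : η ≠ 0) (s : ℝ) :
    s * zeta (η * s) = (1 - exp (-(η * s))) / η := by
  rw [eq_div_iff hη, ← mul_zeta]
  ring

theorem sq_mul_omegaFn_mul {η : ℝ} (hη : η ≠ 0) (s : ℝ) :
    s ^ 2 * omegaFn (η * s) = (exp (-(η * s)) - 1 + η * s) / η ^ 2 := by
  rw [eq_div_iff (pow_ne_zero 2 hη), ← sq_mul_omegaFn]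
  ring

theorem phiFn_of_ne_zero {η : ℝ} (hη : η ≠ 0) (ρ ν β T t : ℝ) :
    phiFn ρ ν β η T t =
      (1 + exp (-(η * (T - t))) + ν * ρ * (1 - exp (-(η * (T - t)))) / η
        + β / ρ * (2 + ρ * (T - t) + ρ * (1 - exp (-(η * (T - t)))) / η
          + ν * ρ ^ 2 * (exp (-(η * (T - t))) - 1 + η * (T - t)) / η ^ 2))
      / (2 * (2 + ρ * (T - t))) := by
  rw [phiFn]
  linear_combination (ν * ρ + β / ρ * ρ) / (2 * (2 + ρ * (T - t))) * mul_zeta_mul hη (T - t)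
    + β / ρ * ν * ρ ^ 2 / (2 * (2 + ρ * (T - t))) * sq_mul_omegaFn_mul hη (T - t)

theorem phiFn_decomposition_general (ρ ν β α T : ℝ) (hρ : 0 < ρ)
    (hη : β - α ≠ 0) :
    ∀ t ∈ Set.Icc (0:ℝ) T,
      phiFn ρ ν β (β - α) T t * Real.exp (β * (T - t))
        = (β / 2) * (1 / ρ + ν / (β - α)) * Real.exp (β * (T - t))
          + (1 / 2 + ν * (ρ - 2 * β) / (2 * (β - α))
              + (β / (2 * (β - α))) * (1 - ν * ρ / (β - α)))
            * Real.exp (β * (T - t)) / (2 + ρ * (T - t))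
          + (1 / 2 - ν * ρ / (2 * (β - α))
              - (β / (2 * (β - α))) * (1 - ν * ρ / (β - α)))
            * Real.exp (α * (T - t)) / (2 + ρ * (T - t)) := by
  rintro t ⟨-, htT⟩
  have hden : 2 + ρ * (T - t) ≠ 0 := by
    have : 0 ≤ ρ * (T - t) := mul_nonneg hρ.le (sub_nonneg.mpr htT)
    positivity
  have hexp : exp (α * (T - t)) = exp (β * (T - t)) * exp (-((β - α) * (T - t))) := by
    rw [← exp_add]
    ring_nf
  rw [phiFn_of_ne_zero hη, hexp]
  field_simp
  ring

theorem phiFn_decomposition (ρ ν β α T : ℝ) (hρ : 0 < ρ) (hν : ν ∈ Set.Icc (0:ℝ) 1)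
    (hη : β - α ≠ 0) (hT : 0 < T) :
    ∀ t ∈ Set.Icc (0:ℝ) T,
      phiFn ρ ν β (β - α) T t * Real.exp (β * (T - t))
        = (β / 2) * (1 / ρ + ν / (β - α)) * Real.exp (β * (T - t))
          + (1 / 2 + ν * (ρ - 2 * β) / (2 * (β - α))
              + (β / (2 * (β - α))) * (1 - ν * ρ / (β - α)))
            * Real.exp (β * (T - t)) / (2 + ρ * (T - t))
          + (1 / 2 - ν * ρ / (2 * (β - α))
              - (β / (2 * (β - α))) * (1 - ν * ρ / (β - α)))
            * Real.exp (α * (T - t)) / (2 + ρ * (T - t)) :=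
  phiFn_decomposition_general ρ ν β α T hρ hη
end

section
/- Let ρ > 0, q > 0, m₁ > 0, ν ∈ [0,1] and T > 0. Let N: [0,T] → ℝ be a bounded measurable function with N(0) = N₀, and suppose D, δ: [0,T] → ℝ are bounded measurable functions satisfying, for all t ∈ [0,T], the integral equations D(t) = D(0) − ρ·∫₀ᵗ D(s) ds + ((1−ν)/q)·(N(t) − N₀) and δ(t) = δ(0) − ρ·∫₀ᵗ δ(s) ds + ((1−ν)ρ/m₁)·(N(t) − N₀). Then for all t ∈ [0,T], (m₁/q)·δ(t) − ρ·D(t) = exp(−ρt)·((m₁/q)·δ(0) − ρ·D(0)). In particular, if q·D(0) = m₁·δ(0)/ρ, then q·D(t) = m₁·δ(t)/ρ for all t ∈ [0,T]. -/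
/-!
The forcing terms of `D` and `δ` are both multiples of `N t - N 0`, and the weights `m₁ / q`
and `ρ` make them cancel: `E = (m₁ / q) δ - ρ D` then solves the
unforced equation `E t = E 0 - ρ ∫₀ᵗ E`. This Volterra equation makes `E` continuous, hence
its primitive `F` satisfies `F' = E 0 - ρ F`, and `exp (ρ t) (E 0 - ρ F t)` is constant.
-/

open MeasureTheory Set

theorem integrableOn_Icc_of_abs_le {f : ℝ → ℝ} {a b : ℝ} (hf : Measurable f)
    (hbd : ∃ C : ℝ, ∀ t ∈ Icc a b, |f t| ≤ C) : IntegrableOn f (Icc a b) := by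
  obtain ⟨C, hC⟩ := hbd
  exact Measure.integrableOn_of_bounded measure_Icc_lt_top.ne hf.aestronglyMeasurable
    (ae_restrict_of_forall_mem measurableSet_Icc hC)

theorem sub_eq_sub_mul_integral_of_proportional_forcing {D δ N : ℝ → ℝ} {ρ a b α β t : ℝ}
    (hDint : IntervalIntegrable D volume 0 t) (hδint : IntervalIntegrable δ volume 0 t)
    (hD : D t = D 0 - ρ * (∫ s in (0:ℝ)..t, D s) + a * (N t - N 0))
    (hδ : δ t = δ 0 - ρ * (∫ s in (0:ℝ)..t, δ s) + b * (N t - N 0))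
    (hab : α * b = β * a) :
    α * δ t - β * D t = (α * δ 0 - β * D 0) - ρ * ∫ s in (0:ℝ)..t, (α * δ s - β * D s) := by
  rw [intervalIntegral.integral_sub (hδint.const_mul α) (hDint.const_mul β),
    intervalIntegral.integral_const_mul, intervalIntegral.integral_const_mul, hD, hδ]
  linear_combination (N t - N 0) * hab

section DecayEquation

variable {f : ℝ → ℝ} {ρ T : ℝ}

theorem continuousOn_of_eq_sub_mul_integral (hf : IntegrableOn f (Icc 0 T))
    (h : ∀ t ∈ Icc 0 T, f t = f 0 - ρ * ∫ s in (0:ℝ)..t, f s) : ContinuousOn f (Icc 0 T) := by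
  rcases lt_or_ge T 0 with hT | hT
  · simp [Icc_eq_empty_of_lt hT]
  rw [← uIcc_of_le hT] at hf h ⊢
  exact (continuousOn_const.sub
    (continuousOn_const.mul (intervalIntegral.continuousOn_primitive_interval hf))).congr h

theorem eq_exp_mul_of_eq_sub_mul_integral (hf : ContinuousOn f (Icc 0 T))
    (h : ∀ t ∈ Icc 0 T, f t = f 0 - ρ * ∫ s in (0:ℝ)..t, f s) :
    ∀ t ∈ Icc 0 T, f t = Real.exp (-(ρ * t)) * f 0 := by
  intro t ht
  have hT : 0 ≤ T := ht.1.trans ht.2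
  -- A continuous extension of `f` to `ℝ` has a primitive differentiable everywhere.
  set g : ℝ → ℝ := IccExtend hT ((Icc 0 T).domRestrict f)
  have hg_cont : Continuous g := continuous_IccExtend_iff.2 hf.domRestrict
  have hg_eq : EqOn g f (Icc 0 T) := fun s hs => IccExtend_of_mem hT _ hs
  set F : ℝ → ℝ := fun u => ∫ s in (0:ℝ)..u, g s
  have hfF : ∀ s ∈ Icc 0 T, f s = f 0 - ρ * F s := by
    intro s hs
    rw [h s hs, intervalIntegral.integral_congr (hg_eq.symm.mono _)]
    rw [uIcc_of_le hs.1]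
    exact Icc_subset_Icc le_rfl hs.2
  set u : ℝ → ℝ := fun s => Real.exp (ρ * s) * (f 0 - ρ * F s)
  have hu_deriv : ∀ s ∈ Icc 0 T, HasDerivAt u 0 s := by
    intro s hs
    have hexp : HasDerivAt (fun s => Real.exp (ρ * s)) (Real.exp (ρ * s) * ρ) s := by
      simpa using ((hasDerivAt_id s).const_mul ρ).exp
    refine (hexp.mul (((hg_cont.integral_hasStrictDerivAt 0 s).hasDerivAt.const_mul ρ).const_sub
      (f 0))).congr_deriv ?_
    rw [hg_eq hs, ← hfF s hs]
    ring
  have hu_const : u t = u 0 :=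
    constant_of_has_deriv_right_zero
      (fun s hs => (hu_deriv s hs).continuousAt.continuousWithinAt)
      (fun s hs => (hu_deriv s (Ico_subset_Icc_self hs)).hasDerivWithinAt) t ht
  have hu_t : u t = Real.exp (ρ * t) * f t := by rw [hfF t ht]
  have hu_0 : u 0 = f 0 := by simp [u, F]
  rw [Real.exp_neg, ← hu_0, ← hu_const, hu_t, ← mul_assoc, inv_mul_cancel₀ (Real.exp_ne_zero _),
    one_mul]

end DecayEquation

theorem MIHM_steady_state_general (ρ q m₁ ν T : ℝ) (hρ : 0 < ρ) (hq : 0 < q) (hm : 0 < m₁)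
    (N D δ : ℝ → ℝ)
    (hDmeas : Measurable D) (hDbd : ∃ C : ℝ, ∀ t ∈ Set.Icc (0:ℝ) T, |D t| ≤ C)
    (hδmeas : Measurable δ) (hδbd : ∃ C : ℝ, ∀ t ∈ Set.Icc (0:ℝ) T, |δ t| ≤ C)
    (hD : ∀ t ∈ Set.Icc (0:ℝ) T,
      D t = D 0 - ρ * (∫ s in (0:ℝ)..t, D s) + ((1 - ν) / q) * (N t - N 0))
    (hδeq : ∀ t ∈ Set.Icc (0:ℝ) T,
      δ t = δ 0 - ρ * (∫ s in (0:ℝ)..t, δ s) + ((1 - ν) * ρ / m₁) * (N t - N 0)) :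
    (∀ t ∈ Set.Icc (0:ℝ) T,
      (m₁ / q) * δ t - ρ * D t = Real.exp (-(ρ * t)) * ((m₁ / q) * δ 0 - ρ * D 0)) ∧
    (q * D 0 = m₁ * δ 0 / ρ → ∀ t ∈ Set.Icc (0:ℝ) T, q * D t = m₁ * δ t / ρ) := by
  have hDint := integrableOn_Icc_of_abs_le hDmeas hDbd
  have hδint := integrableOn_Icc_of_abs_le hδmeas hδbd
  have hintervals : ∀ {f : ℝ → ℝ}, IntegrableOn f (Icc 0 T) →
      ∀ t ∈ Icc (0:ℝ) T, IntervalIntegrable f volume 0 t := fun hf t ht =>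
    (intervalIntegrable_iff_integrableOn_Icc_of_le ht.1).2
      (hf.mono_set (Icc_subset_Icc le_rfl ht.2))
  have hE : ∀ t ∈ Icc (0:ℝ) T, (m₁ / q) * δ t - ρ * D t
      = ((m₁ / q) * δ 0 - ρ * D 0) - ρ * ∫ s in (0:ℝ)..t, ((m₁ / q) * δ s - ρ * D s) :=
    fun t ht => sub_eq_sub_mul_integral_of_proportional_forcing (hintervals hDint t ht)
      (hintervals hδint t ht) (hD t ht) (hδeq t ht) (by field_simp)
  have hdecay := eq_exp_mul_of_eq_sub_mul_integral (f := fun s => (m₁ / q) * δ s - ρ * D s)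
    (continuousOn_of_eq_sub_mul_integral ((hδint.const_mul _).sub (hDint.const_mul _)) hE) hE
  refine ⟨hdecay, fun h0 t ht => ?_⟩
  have hE0 : (m₁ / q) * δ 0 - ρ * D 0 = 0 := by
    field_simp at h0 ⊢
    linarith
  have hEt := hdecay t ht
  rw [hE0, mul_zero] at hEt
  field_simp at hEt ⊢
  linarith

theorem MIHM_steady_state (ρ q m₁ ν T : ℝ) (hρ : 0 < ρ) (hq : 0 < q) (hm : 0 < m₁)
    (hν : ν ∈ Set.Icc (0:ℝ) 1) (hT : 0 < T)
    (N D δ : ℝ → ℝ)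
    (hNmeas : Measurable N) (hNbd : ∃ C : ℝ, ∀ t ∈ Set.Icc (0:ℝ) T, |N t| ≤ C)
    (hDmeas : Measurable D) (hDbd : ∃ C : ℝ, ∀ t ∈ Set.Icc (0:ℝ) T, |D t| ≤ C)
    (hδmeas : Measurable δ) (hδbd : ∃ C : ℝ, ∀ t ∈ Set.Icc (0:ℝ) T, |δ t| ≤ C)
    (hD : ∀ t ∈ Set.Icc (0:ℝ) T,
      D t = D 0 - ρ * (∫ s in (0:ℝ)..t, D s) + ((1 - ν) / q) * (N t - N 0))
    (hδeq : ∀ t ∈ Set.Icc (0:ℝ) T,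
      δ t = δ 0 - ρ * (∫ s in (0:ℝ)..t, δ s) + ((1 - ν) * ρ / m₁) * (N t - N 0)) :
    (∀ t ∈ Set.Icc (0:ℝ) T,
      (m₁ / q) * δ t - ρ * D t = Real.exp (-(ρ * t)) * ((m₁ / q) * δ 0 - ρ * D 0)) ∧
    (q * D 0 = m₁ * δ 0 / ρ → ∀ t ∈ Set.Icc (0:ℝ) T, q * D t = m₁ * δ t / ρ) :=
  MIHM_steady_state_general ρ q m₁ ν T hρ hq hm N D δ hDmeas hDbd hδmeas hδbd hD hδeq
end
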